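/- arXiv:1512.03078 — 4 statements merged into one kernel-verified Lean document; each statement's English description precedes it below -/
import Mathlib

section
/- For an involution s in S_N, the quantity inv(s) + exc(s) is even, where inv(s) is the number of inversions and exc(s) = |{i : s(i) > i}| is the number of excedances. -/
/-- Number of inversions of a permutation of `Fin N`. -/
def inversions {N : ℕ} (s : Equiv.Perm (Fin N)) : ℕ :=
  (Finset.univ.filter (fun p : Fin N × Fin N => p.1 < p.2 ∧ s p.2 < s p.1)).card

/-- One step of the Bruhat relation: multiply by a transposition, not decreasing inversions. -/
def bruhatStep {N : ℕ} (σ τ : Equiv.Perm (Fin N)) : Prop :=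
  ∃ i j : Fin N, i ≠ j ∧ τ = σ * Equiv.swap i j ∧ inversions σ ≤ inversions τ

/-- The Bruhat order on the symmetric group: reflexive-transitive closure of `bruhatStep`. -/
def bruhatLE {N : ℕ} : Equiv.Perm (Fin N) → Equiv.Perm (Fin N) → Prop :=
  Relation.ReflTransGen bruhatStep

/-- Strict Bruhat order. -/
def bruhatLT {N : ℕ} (σ τ : Equiv.Perm (Fin N)) : Prop := bruhatLE σ τ ∧ σ ≠ τ

/-- Number of excedances of a permutation. -/
def exced {N : ℕ} (s : Equiv.Perm (Fin N)) : ℕ :=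
  (Finset.univ.filter (fun i : Fin N => i < s i)).card

/-- The involution length `l_I`. -/
def lI {N : ℕ} (s : Equiv.Perm (Fin N)) : ℕ := (inversions s + exced s) / 2


lemma even_card_of_invol {α : Type*} [DecidableEq α] (g : α → α) (hg : ∀ a, g (g a) = a)
    (t : Finset α) (ht : ∀ a ∈ t, g a ∈ t) (hfix : ∀ a ∈ t, g a ≠ a) : Even t.card := by
  induction t using Finset.strongInduction with
  | _ t ih =>
    rcases t.eq_empty_or_nonempty with rfl | ⟨a, ha⟩
    · simp
    · have hga : g a ∈ t := ht a ha
      have hne : g a ≠ a := hfix a ha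
      set t' := t \ {a, g a} with ht'
      have hsub : t' ⊂ t := by
        refine Finset.ssubset_iff_of_subset (Finset.sdiff_subset) |>.mpr ⟨a, ha, by simp [ht']⟩
      have hclosed : ∀ b ∈ t', g b ∈ t' := by
        intro b hb
        simp only [ht', Finset.mem_sdiff, Finset.mem_insert, Finset.mem_singleton] at hb ⊢
        refine ⟨ht b hb.1, ?_⟩
        rintro (h | h)
        · exact hb.2 (Or.inr (by rw [← h, hg]))
        · exact hb.2 (Or.inl (by have := congrArg g h; rwa [hg, hg] at this))
      have hfix' : ∀ b ∈ t', g b ≠ b := fun b hb => hfix b (Finset.mem_sdiff.mp hb).1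
      have hcard : t.card = t'.card + 2 := by
        have : ({a, g a} : Finset α) ⊆ t := by
          intro x hx; simp at hx; rcases hx with rfl | rfl <;> assumption
        have h2 : ({a, g a} : Finset α).card = 2 := Finset.card_pair hne.symm
        have h3 : ({a, g a} : Finset α).card ≤ t.card := Finset.card_le_card this
        rw [ht', Finset.card_sdiff_of_subset this]
        omega
      have := ih t' hsub hclosed hfix'
      rw [hcard]
      exact this.add even_two

/-- For an involution, inversions plus excedances is even. -/
theorem inversions_add_exced_even {N : ℕ} (s : Equiv.Perm (Fin N))
    (hs : s * s = 1) : Even (inversions s + exced s) := by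
  classical
  have hss : ∀ x, s (s x) = x := fun x => by
    have := congrArg (fun σ : Equiv.Perm (Fin N) => σ x) hs
    simpa using this
  set t := (Finset.univ.filter (fun p : Fin N × Fin N => p.1 < p.2 ∧ s p.2 < s p.1)) with htdef
  set g : Fin N × Fin N → Fin N × Fin N := fun p => (s p.2, s p.1) with hgdef
  have hg : ∀ p, g (g p) = p := fun p => by simp [hgdef, hss]
  have ht : ∀ p ∈ t, g p ∈ t := by
    intro p hp
    simp only [htdef, hgdef, Finset.mem_filter, Finset.mem_univ, true_and] at hp ⊢
    rw [hss, hss]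
    exact ⟨hp.2, hp.1⟩
  have hsplit : (t.filter (fun p => g p = p)).card + (t.filter (fun p => ¬ g p = p)).card
      = t.card := Finset.card_filter_add_card_filter_not _
  have heven : Even (t.filter (fun p => ¬ g p = p)).card := by
    apply even_card_of_invol g hg
    · intro p hp
      rw [Finset.mem_filter] at hp ⊢
      refine ⟨ht p hp.1, ?_⟩
      rw [hg]
      exact fun h => hp.2 h.symm
    · intro p hp
      exact (Finset.mem_filter.mp hp).2
  have hfix : (t.filter (fun p => g p = p)).card = exced s := by
    unfold exced
    apply Finset.card_bij' (fun p _ => p.1) (fun i _ => (i, s i))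
    · intro p hp
      simp only [htdef, hgdef, Finset.mem_filter, Finset.mem_univ, true_and, Prod.ext_iff] at hp ⊢
      obtain ⟨⟨h1, _⟩, _, h3⟩ := hp
      rw [h3]; exact h1
    · intro i hi
      simp only [Finset.mem_filter, Finset.mem_univ, true_and] at hi
      simp [htdef, hgdef, hss, hi]
    · intro p hp
      simp only [htdef, hgdef, Finset.mem_filter, Prod.ext_iff] at hp
      obtain ⟨_, _, h3⟩ := hp
      exact Prod.ext rfl h3
    · intro i hi
      rfl
  have hinv : inversions s = t.card := rfl
  obtain ⟨k, hk⟩ := heven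
  exact ⟨exced s + k, by omega⟩
end

section
/- Let N = 2n. The involution s_0 defined by s_0(i) = n + i and s_0(n+i) = i for 1 ≤ i ≤ n is the minimal element of I_N^s: every fixed-point-free involution s of S_N mapping {1,...,n} onto {n+1,...,2n} satisfies s_0 ≤_B s in the Bruhat order. -/
/-!
Induction on the number of inversions. If `s` has a descent `s (a + 1) < s a` with `a + 1 < n`,
then `s a` and `s (a + 1)` lie in the upper half, where `t = swap a (a + 1)` acts trivially; hence
`t * s * t` is again an involution of the same kind, and `t * s * t → s * t → s` are two Bruhat
steps, each adding one inversion. If `s` has no such descent, it is increasing on the lower half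
with values in the upper half, which forces `s i = i + n` there, and so `s = s0`.
-/

open Equiv

section Inversions

variable {N : ℕ}

def inversionSet (w : Perm (Fin N)) : Finset (Fin N × Fin N) :=
  Finset.univ.filter fun p => p.1 < p.2 ∧ w p.2 < w p.1

lemma inversions_eq_card_inversionSet (w : Perm (Fin N)) :
    inversions w = (inversionSet w).card := rfl

@[simp]
lemma mem_inversionSet {w : Perm (Fin N)} {p : Fin N × Fin N} :
    p ∈ inversionSet w ↔ p.1 < p.2 ∧ w p.2 < w p.1 := by
  simp [inversionSet]

lemma inversions_inv (w : Perm (Fin N)) : inversions w⁻¹ = inversions w := by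
  simp only [inversions_eq_card_inversionSet]
  refine Finset.card_bij' (fun p _ => (w⁻¹ p.2, w⁻¹ p.1)) (fun p _ => (w p.2, w p.1))
    ?_ ?_ (by simp) (by simp)
  · intro p hp
    simp only [mem_inversionSet] at hp ⊢
    simpa using hp.symm
  · intro p hp
    simp only [mem_inversionSet] at hp ⊢
    simpa using hp.symm

lemma swap_lt_swap_iff_of_adjacent {i j x y : Fin N} (hij : (i : ℕ) + 1 = j)
    (hij' : ¬(x = i ∧ y = j)) (hji : ¬(x = j ∧ y = i)) :
    swap i j x < swap i j y ↔ x < y := by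
  simp only [Fin.ext_iff] at hij' hji
  simp only [swap_apply_def, Fin.lt_def]
  split_ifs <;> simp only [Fin.ext_iff] at * <;> omega

lemma inversionSet_mul_swap {w : Perm (Fin N)} {i j : Fin N} (hij : (i : ℕ) + 1 = j)
    (h : w j < w i) :
    inversionSet (w * swap i j) =
      ((inversionSet w).erase (i, j)).map (prodCongr (swap i j) (swap i j)).toEmbedding := by
  ext ⟨x, y⟩
  rw [Finset.mem_map_equiv, Finset.mem_erase]
  simp only [prodCongr_symm, symm_swap, prodCongr_apply, Prod.map, mem_inversionSet,
    Perm.mul_apply, ne_eq, Prod.mk.injEq]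
  have hlt : i < j := Fin.lt_def.2 (by omega)
  by_cases hxy : x = i ∧ y = j
  · obtain ⟨rfl, rfl⟩ := hxy
    simp [h.not_gt, hlt.not_gt]
  by_cases hyx : x = j ∧ y = i
  · obtain ⟨rfl, rfl⟩ := hyx
    simp [hlt.not_gt]
  have hswap : ¬(swap i j x = i ∧ swap i j y = j) := by
    rwa [swap_apply_eq_iff, swap_apply_left, swap_apply_eq_iff, swap_apply_right]
  rw [swap_lt_swap_iff_of_adjacent hij hxy hyx]
  tauto

lemma inversions_mul_swap_add_one {w : Perm (Fin N)} {i j : Fin N} (hij : (i : ℕ) + 1 = j)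
    (h : w j < w i) : inversions (w * swap i j) + 1 = inversions w := by
  have hmem : (i, j) ∈ inversionSet w := mem_inversionSet.2 ⟨Fin.lt_def.2 (by simp; omega), h⟩
  rw [inversions_eq_card_inversionSet, inversionSet_mul_swap hij h, Finset.card_map,
    Finset.card_erase_add_one hmem, inversions_eq_card_inversionSet]

lemma inversions_swap_mul_add_one {w : Perm (Fin N)} {i j : Fin N} (hij : (i : ℕ) + 1 = j)
    (h : w⁻¹ j < w⁻¹ i) : inversions (swap i j * w) + 1 = inversions w := by
  rw [← inversions_inv, mul_inv_rev, swap_inv, inversions_mul_swap_add_one hij h, inversions_inv]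

end Inversions

lemma bruhatStep_swap_mul {N : ℕ} {σ : Perm (Fin N)} {i j : Fin N} (hij : i ≠ j)
    (h : inversions σ ≤ inversions (swap i j * σ)) : bruhatStep σ (swap i j * σ) :=
  ⟨σ⁻¹ i, σ⁻¹ j, σ⁻¹.injective.ne hij, swap_mul_eq_mul_swap σ i j, h⟩

lemma Nat.eq_add_of_lt_succ_of_bounds {n m : ℕ} {f : ℕ → ℕ}
    (hf : ∀ i, i + 1 < n → f i < f (i + 1)) (hlo : ∀ i < n, m ≤ f i)
    (hhi : ∀ i < n, f i < m + n) {i : ℕ} (hi : i < n) : f i = m + i := by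
  have hgrowth : ∀ d k, k + d < n → f k + d ≤ f (k + d) := by
    intro d
    induction d with
    | zero => simp
    | succ d ih =>
      intro k hk
      have hstep := hf (k + d) (by omega)
      have hprev := ih k (by omega)
      show f k + (d + 1) ≤ f (k + d + 1)
      omega
  have hfirst : f 0 + i ≤ f i := by simpa using hgrowth i 0 (by omega)
  have hlast := hgrowth (n - 1 - i) i (by omega)
  have hlo0 := hlo 0 (by omega)
  have hhi_last := hhi (i + (n - 1 - i)) (by omega)
  omega

lemma mul_self_conj_swap_eq_one {α : Type*} [DecidableEq α] {s : Perm α} (hinv : s * s = 1)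
    (a b : α) : swap a b * s * swap a b * (swap a b * s * swap a b) = 1 := by
  simp only [mul_assoc, swap_mul_self_mul]
  rw [← mul_assoc s, hinv, one_mul, swap_mul_self]

section LowerToUpperHalf

variable {n : ℕ} {s : Perm (Fin (n + n))}

lemma swap_apply_of_lt_of_le {a b x : Fin (n + n)} (ha : (a : ℕ) < n) (hb : (b : ℕ) < n)
    (hx : n ≤ (x : ℕ)) : swap a b x = x :=
  swap_apply_of_ne_of_ne (fun h => by subst h; omega) (fun h => by subst h; omega)

lemma le_conj_swap_apply_of_lt (hhalf : ∀ i : Fin (n + n), (i : ℕ) < n → n ≤ (s i : ℕ))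
    {a b : Fin (n + n)} (ha : (a : ℕ) < n) (hb : (b : ℕ) < n)
    (i : Fin (n + n)) (hi : (i : ℕ) < n) : n ≤ ((swap a b * s * swap a b) i : ℕ) := by
  have hti : (swap a b i : ℕ) < n := by
    rw [swap_apply_def]; split_ifs <;> assumption
  simpa [swap_apply_of_lt_of_le ha hb (hhalf _ hti)] using hhalf _ hti

lemma bruhatLE_conj_swap_of_descent (hinv : s * s = 1)
    (hhalf : ∀ i : Fin (n + n), (i : ℕ) < n → n ≤ (s i : ℕ))
    {a b : Fin (n + n)} (hab : (a : ℕ) + 1 = b) (hb : (b : ℕ) < n) (hdesc : s b < s a) :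
    bruhatLE (swap a b * s * swap a b) s ∧ inversions (swap a b * s * swap a b) < inversions s := by
  rw [mul_assoc]
  have hs : s⁻¹ = s := inv_eq_of_mul_eq_one_left hinv
  have hne : a ≠ b := fun h => by subst h; omega
  have hfix : ∀ i : Fin (n + n), (i : ℕ) < n → swap a b (s i) = s i := fun i hi =>
    swap_apply_of_lt_of_le (by omega) hb (hhalf i hi)
  have hright : inversions (s * swap a b) + 1 = inversions s :=
    inversions_mul_swap_add_one hab hdesc
  have hleft : inversions (swap a b * (s * swap a b)) + 1 = inversions (s * swap a b) :=
    inversions_swap_mul_add_one hab (by simpa [hs, hfix a (by omega), hfix b hb] using hdesc)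
  have hstep : bruhatStep (swap a b * (s * swap a b)) (s * swap a b) := by
    simpa using bruhatStep_swap_mul hne (σ := swap a b * (s * swap a b))
      (by rw [swap_mul_self_mul]; omega)
  exact ⟨.tail (.single hstep) ⟨a, b, hne, by simp [mul_assoc], by omega⟩, by omega⟩

lemma eq_of_lowerHalf_strictMono (s0 : Perm (Fin (n + n)))
    (hs0 : ∀ i : Fin (n + n),
      ((i : ℕ) < n → (s0 i : ℕ) = (i : ℕ) + n) ∧ (n ≤ (i : ℕ) → (s0 i : ℕ) = (i : ℕ) - n))
    (hinv : s * s = 1) (hhalf : ∀ i : Fin (n + n), (i : ℕ) < n → n ≤ (s i : ℕ))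
    (hmono : ∀ a b : Fin (n + n), (a : ℕ) + 1 = b → (b : ℕ) < n → s a < s b) : s = s0 := by
  let f : ℕ → ℕ := fun k => if h : k < n + n then s ⟨k, h⟩ else 0
  have hf : ∀ k, k + 1 < n → f k < f (k + 1) := fun k hk => by
    simpa [f, dif_pos (by omega : k < n + n), dif_pos (by omega : k + 1 < n + n)] using
      hmono ⟨k, by omega⟩ ⟨k + 1, by omega⟩ rfl hk
  have hlo : ∀ k < n, n ≤ f k := fun k hk => by
    simpa [f, dif_pos (by omega : k < n + n)] using hhalf ⟨k, by omega⟩ hk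
  have hhi : ∀ k < n, f k < n + n := fun k hk => by
    simp only [f, dif_pos (by omega : k < n + n)]; omega
  have hlow : ∀ i : Fin (n + n), (i : ℕ) < n → (s i : ℕ) = n + i := fun i hi => by
    simpa [f] using Nat.eq_add_of_lt_succ_of_bounds hf hlo hhi hi
  ext i
  rcases lt_or_ge (i : ℕ) n with hi | hi
  · rw [hlow i hi, (hs0 i).1 hi]; omega
  · have hj : s ⟨i - n, by omega⟩ = i := Fin.ext (by rw [hlow _ (by simp; omega)]; simp; omega)
    have hsi : s i = ⟨i - n, by omega⟩ := by
      simpa [hj] using Perm.ext_iff.1 hinv ⟨i - n, by omega⟩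
    rw [hsi, (hs0 i).2 hi]

end LowerToUpperHalf

/-- The involution i ↦ n+i is the minimal element (for the Bruhat order) among
fixed-point-free involutions of S_{2n} mapping the first half onto the second half. -/
theorem s0_bruhat_minimal {n : ℕ} (s0 : Equiv.Perm (Fin (n + n)))
    (hs0 : ∀ i : Fin (n + n),
      ((i : ℕ) < n → (s0 i : ℕ) = (i : ℕ) + n) ∧ (n ≤ (i : ℕ) → (s0 i : ℕ) = (i : ℕ) - n))
    (s : Equiv.Perm (Fin (n + n))) (hinv : s * s = 1)
    (hhalf : ∀ i : Fin (n + n), (i : ℕ) < n → n ≤ (s i : ℕ)) :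
    bruhatLE s0 s := by
  by_cases hdesc : ∃ a b : Fin (n + n), (a : ℕ) + 1 = b ∧ (b : ℕ) < n ∧ s b < s a
  · obtain ⟨a, b, hab, hb, hdesc⟩ := hdesc
    have hprev := s0_bruhat_minimal s0 hs0 _ (mul_self_conj_swap_eq_one hinv a b)
      (le_conj_swap_apply_of_lt hhalf (by omega) hb)
    exact hprev.trans (bruhatLE_conj_swap_of_descent hinv hhalf hab hb hdesc).1
  · simp only [not_exists, not_and, not_lt] at hdesc
    have hmono : ∀ a b : Fin (n + n), (a : ℕ) + 1 = b → (b : ℕ) < n → s a < s b :=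
      fun a b hab hb => (hdesc a b hab hb).lt_of_ne (s.injective.ne fun h => by subst h; omega)
    rw [eq_of_lowerHalf_strictMono s0 hs0 hinv hhalf hmono]
    exact .refl
termination_by inversions s
decreasing_by exact (bruhatLE_conj_swap_of_descent hinv hhalf hab hb hdesc).2
end

section
/- Let s, s' ∈ S_N with s ≤_B s' and inv(s) = inv(s') − 2. Then there exist exactly two elements u of S_N with inv(u) = inv(s)+1 and s <_B u <_B s'. (The interval [s,s'] of length 2 in Bruhat order is a diamond.) -/
/-
For `i < j` with `u i < u j`, multiplying `u` by the transposition `(i j)` raises the inversion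
number by `2m + 1`, where `m` counts the positions strictly between `i` and `j` whose values lie
strictly between `u i` and `u j`. Hence every Bruhat step raises `inversions` by an odd amount,
`s'` is reached from `s` through two covers, `s' = s (a b) (c d)`, and the elements strictly
between `s` and `s'` are the `s (i j)` for which `(i j)` gives a cover of `s` and is a left factor
of `V = (a b) (c d)`.

If `(a b)` and `(c d)` are disjoint, the left factors of `V` are exactly `(a b)` and `(c d)`, and
both give covers. Otherwise `V` is a 3-cycle on positions `α < β < γ` whose left factors are the
three transpositions of `{α, β, γ}`. They cannot all give covers, since `(β, s β)` would lie inside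
the rectangle spanned by `(α, s α)` and `(γ, s γ)`, and a case analysis of the given chain
produces a second cover besides `(a b)`.
-/

open Equiv Finset

section Transpositions

variable {ι : Type*} [DecidableEq ι]

theorem swap_eq_swap_of_apply_eq {i j k l : ι} (hij : i ≠ j) (h : swap k l i = j) :
    swap k l = swap i j := by
  obtain ⟨-, rfl | rfl⟩ := swap_apply_ne_self_iff.mp (h ▸ hij.symm)
  · rw [swap_apply_left] at h
    rw [h]
  · rw [swap_apply_right] at h
    rw [h, swap_comm]

theorem apply_ne_self_of_swap_mul_swap_eq {i j k l : ι} {V : Perm ι} (hij : i ≠ j)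
    (h : swap i j * swap k l = V) (hV : V ≠ 1) : V i ≠ i := fun hVi => by
  have hkl : swap k l i = j := by
    rw [← h, Perm.mul_apply, swap_apply_eq_iff, swap_apply_left] at hVi
    exact hVi
  rw [swap_eq_swap_of_apply_eq hij hkl, swap_mul_self] at h
  exact hV h.symm

theorem apply_eq_of_swap_mul_swap_eq {i j k l : ι} {V : Perm ι} (hij : i ≠ j)
    (h : swap i j * swap k l = V) (hV : ∀ x, V (V x) = x) (hVi : V i ≠ i) : V i = j := by
  by_contra hVij
  obtain ⟨m, hm⟩ : ∃ m, swap k l i = m := ⟨_, rfl⟩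
  have hmi : i ≠ m := by rintro rfl; exact hVij (by rw [← h, Perm.mul_apply, hm, swap_apply_left])
  have hmj : m ≠ j := by rintro rfl; exact hVi (by rw [← h, Perm.mul_apply, hm, swap_apply_right])
  rw [swap_eq_swap_of_apply_eq hmi hm] at h
  subst h
  have hVVi := hV i
  simp only [Perm.mul_apply, swap_apply_left, swap_apply_of_ne_of_ne hmi.symm hmj,
    swap_apply_right] at hVVi
  exact hij hVVi.symm

end Transpositions

section Inversions

variable {N : ℕ}

theorem inversions_mul_inv_eq_card (u f : Perm (Fin N)) :
    inversions (u * f⁻¹) = #{p : Fin N × Fin N | f p.1 < f p.2 ∧ u p.2 < u p.1} :=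
  card_equiv (f⁻¹.prodCongr f⁻¹) fun p => by
    simp only [mem_filter, mem_univ, true_and]
    simp [Perm.mul_apply]

theorem inversions_mul_inv_add_card_flipped (u f : Perm (Fin N)) :
    inversions (u * f⁻¹) + #{p : Fin N × Fin N | p.1 < p.2 ∧ f p.2 < f p.1 ∧ u p.2 < u p.1} =
      inversions u + #{p : Fin N × Fin N | p.1 < p.2 ∧ f p.2 < f p.1 ∧ u p.1 < u p.2} := by
  have hcomm : #{p : Fin N × Fin N | p.1 < p.2 ∧ f p.2 < f p.1 ∧ u p.1 < u p.2} =
      #{p : Fin N × Fin N | p.2 < p.1 ∧ f p.1 < f p.2 ∧ u p.2 < u p.1} :=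
    card_equiv (Equiv.prodComm _ _) fun p => by simp
  rw [hcomm, inversions_mul_inv_eq_card, inversions, card_filter, card_filter, card_filter,
    card_filter, ← sum_add_distrib, ← sum_add_distrib]
  refine sum_congr rfl fun p _ => ?_
  have hf := f.injective.ne (a₁ := p.1) (a₂ := p.2)
  have hu := u.injective.ne (a₁ := p.1) (a₂ := p.2)
  split_ifs <;> grind

theorem swap_apply_lt_swap_apply_iff {i j a b : Fin N} (hij : i < j) (hab : a < b) :
    swap i j b < swap i j a ↔ (a = i ∧ b = j) ∨ (a = i ∧ b < j) ∨ (i < a ∧ b = j) := by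
  simp only [swap_apply_def]
  split_ifs <;> omega

theorem card_flipped_swap (P : Fin N × Fin N → Prop) [DecidablePred P] {i j : Fin N}
    (hij : i < j) :
    #{p : Fin N × Fin N | p.1 < p.2 ∧ swap i j p.2 < swap i j p.1 ∧ P p} =
      (if P (i, j) then 1 else 0) + #{k | i < k ∧ k < j ∧ P (i, k)} +
        #{k | i < k ∧ k < j ∧ P (k, j)} := by
  have hij' : (if P (i, j) then 1 else 0) = #{p : Fin N × Fin N | p = (i, j) ∧ P p} := by
    by_cases h : P (i, j) <;> simp [h, filter_and, filter_eq']
  have hi : #{k | i < k ∧ k < j ∧ P (i, k)} =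
      #{p : Fin N × Fin N | p.1 = i ∧ i < p.2 ∧ p.2 < j ∧ P p} := by
    refine card_nbij' (fun k => (i, k)) Prod.snd ?_ ?_ ?_ ?_ <;> rintro ⟨⟩ <;> simp +contextual
  have hj : #{k | i < k ∧ k < j ∧ P (k, j)} =
      #{p : Fin N × Fin N | p.2 = j ∧ i < p.1 ∧ p.1 < j ∧ P p} := by
    refine card_nbij' (fun k => (k, j)) Prod.fst ?_ ?_ ?_ ?_ <;> rintro ⟨⟩ <;> simp +contextual
  rw [hij', hi, hj, card_filter, card_filter, card_filter, card_filter,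
    ← sum_add_distrib, ← sum_add_distrib]
  refine sum_congr rfl fun ⟨a, b⟩ _ => ?_
  by_cases hab : a < b
  · simp only [swap_apply_lt_swap_apply_iff hij hab, Prod.mk.injEq]
    split_ifs <;> grind
  · simp only [hab, false_and, if_false]
    split_ifs <;> grind

theorem inversions_mul_swap_of_lt {u : Perm (Fin N)} {i j : Fin N} (hij : i < j)
    (hu : u i < u j) :
    inversions (u * swap i j) =
      inversions u + 2 * #{k | i < k ∧ k < j ∧ u i < u k ∧ u k < u j} + 1 := by
  have key := inversions_mul_inv_add_card_flipped u (swap i j)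
  rw [swap_inv, card_flipped_swap _ hij, card_flipped_swap _ hij] at key
  have hbetween : #{k | i < k ∧ k < j ∧ u i < u k} + #{k | i < k ∧ k < j ∧ u k < u j} =
      2 * #{k | i < k ∧ k < j ∧ u i < u k ∧ u k < u j} +
        #{k | i < k ∧ k < j ∧ u k < u i} + #{k | i < k ∧ k < j ∧ u j < u k} := by
    simp only [card_filter, mul_sum, ← sum_add_distrib]
    refine sum_congr rfl fun k _ => ?_
    have hi := u.injective.ne (a₁ := k) (a₂ := i)
    have hj := u.injective.ne (a₁ := k) (a₂ := j)
    split_ifs <;> grind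
  simp only [hu, not_lt_of_gt hu, if_true, if_false] at key
  omega

theorem inversions_mul_swap_lt {u : Perm (Fin N)} {i j : Fin N} (hij : i < j) (hu : u j < u i) :
    inversions (u * swap i j) < inversions u := by
  have h := inversions_mul_swap_of_lt (u := u * swap i j) hij (by simpa [Perm.mul_apply] using hu)
  rw [mul_swap_mul_self] at h
  omega

end Inversions
section Bruhat

variable {N : ℕ} {σ τ : Perm (Fin N)}

def SwapCovers (u : Perm (Fin N)) (i j : Fin N) : Prop :=
  i < j ∧ u i < u j ∧ ∀ k, i < k → k < j → ¬(u i < u k ∧ u k < u j)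

theorem inversions_mul_swap_eq_add_one_iff {u : Perm (Fin N)} {i j : Fin N} (hij : i < j) :
    inversions (u * swap i j) = inversions u + 1 ↔ SwapCovers u i j := by
  rcases lt_or_gt_of_ne (u.injective.ne hij.ne) with hu | hu
  · rw [inversions_mul_swap_of_lt hij hu, SwapCovers]
    simp [hij, hu]
  · have := inversions_mul_swap_lt hij hu
    exact iff_of_false (by omega) fun h => lt_asymm hu h.2.1

theorem exists_lt_of_bruhatStep (h : bruhatStep σ τ) :
    ∃ i j, i < j ∧ σ i < σ j ∧ τ = σ * swap i j := by
  obtain ⟨i, j, hij, rfl, hle⟩ := h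
  wlog hlt : i < j generalizing i j
  · rw [swap_comm] at hle ⊢
    exact this j i hij.symm hle (hij.lt_or_gt.resolve_left hlt)
  refine ⟨i, j, hlt, ?_, rfl⟩
  by_contra! hσ
  have := inversions_mul_swap_lt hlt (hσ.lt_of_ne (σ.injective.ne hij.symm))
  omega

theorem inversions_lt_of_bruhatStep (h : bruhatStep σ τ) :
    inversions σ < inversions τ := by
  obtain ⟨i, j, hij, hσ, rfl⟩ := exists_lt_of_bruhatStep h
  rw [inversions_mul_swap_of_lt hij hσ]
  omega

theorem inversions_le_of_bruhatLE (h : bruhatLE σ τ) :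
    inversions σ ≤ inversions τ := by
  induction h with
  | refl => rfl
  | tail _ hstep ih => exact ih.trans (inversions_lt_of_bruhatStep hstep).le

theorem eq_of_bruhatLE_of_inversions_le (h : bruhatLE σ τ)
    (hle : inversions τ ≤ inversions σ) : σ = τ := by
  rcases h.cases_tail with rfl | ⟨ρ, hσρ, hρτ⟩
  · rfl
  · have := inversions_le_of_bruhatLE hσρ
    have := inversions_lt_of_bruhatStep hρτ
    omega

theorem exists_swapCovers_of_bruhatLE (h : bruhatLE σ τ)
    (hτ : inversions τ = inversions σ + 1) : ∃ i j, SwapCovers σ i j ∧ τ = σ * swap i j := by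
  rcases h.cases_tail with rfl | ⟨ρ, hσρ, hρτ⟩
  · omega
  obtain ⟨i, j, hij, hρ, rfl⟩ := exists_lt_of_bruhatStep hρτ
  have hstep := inversions_mul_swap_of_lt hij hρ
  have hσρ' := inversions_le_of_bruhatLE hσρ
  obtain rfl : σ = ρ := eq_of_bruhatLE_of_inversions_le hσρ (by omega)
  exact ⟨i, j, (inversions_mul_swap_eq_add_one_iff hij).mp (by omega), rfl⟩

theorem exists_swapCovers_chain_of_bruhatLE (h : bruhatLE σ τ)
    (hτ : inversions τ = inversions σ + 2) :
    ∃ a b c d, SwapCovers σ a b ∧ SwapCovers (σ * swap a b) c d ∧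
      τ = σ * swap a b * swap c d := by
  rcases h.cases_tail with rfl | ⟨ρ, hσρ, hρτ⟩
  · omega
  obtain ⟨c, d, hcd, hρ, rfl⟩ := exists_lt_of_bruhatStep hρτ
  have hstep := inversions_mul_swap_of_lt hcd hρ
  have hσρ' := inversions_le_of_bruhatLE hσρ
  have hρσ : inversions ρ = inversions σ + 1 := by
    rcases hσρ'.eq_or_lt with heq | hlt
    · obtain rfl := eq_of_bruhatLE_of_inversions_le hσρ heq.ge
      omega
    · omega
  obtain ⟨a, b, hab, rfl⟩ := exists_swapCovers_of_bruhatLE hσρ hρσ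
  exact ⟨a, b, c, d, hab, (inversions_mul_swap_eq_add_one_iff hcd).mp (by omega), rfl⟩

end Bruhat

section Covers

variable {N : ℕ} {s : Perm (Fin N)} {α β γ : Fin N}

theorem not_swapCovers_mul_swap_self {a b : Fin N} (h : SwapCovers s a b) :
    ¬SwapCovers (s * swap a b) a b := fun h' => by
  simp only [SwapCovers, Perm.mul_apply, swap_apply_left, swap_apply_right] at h'
  exact lt_asymm h.2.1 h'.2.1

theorem not_swapCovers_of_between (h₁ : SwapCovers s α β) (h₂ : SwapCovers s β γ) :
    ¬SwapCovers s α γ := fun h => h.2.2 β h₁.1 h₂.1 ⟨h₁.2.1, h₂.2.1⟩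

theorem swapCovers_right_or_outer_of_left_then_right (h₁ : SwapCovers s α β)
    (h₂ : SwapCovers (s * swap α β) β γ) : SwapCovers s β γ ∨ SwapCovers s α γ := by
  obtain ⟨hαβ, hsαβ, hk₁⟩ := h₁
  obtain ⟨hβγ, hv, hk₂⟩ := h₂
  simp only [Perm.mul_apply, swap_apply_right,
    swap_apply_of_ne_of_ne (by omega : γ ≠ α) (by omega : γ ≠ β)] at hv hk₂
  have hk₂' : ∀ k, β < k → k < γ → ¬(s α < s k ∧ s k < s γ) := fun k h h' => by
    simpa only [swap_apply_of_ne_of_ne (by omega : k ≠ α) (by omega : k ≠ β)] using hk₂ k h h'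
  rcases lt_or_gt_of_ne (s.injective.ne hβγ.ne) with h | h
  · exact Or.inl ⟨hβγ, h, fun k hk hk' hs => hk₂' k hk hk' ⟨hsαβ.trans hs.1, hs.2⟩⟩
  · refine Or.inr ⟨hαβ.trans hβγ, hv, fun k hk hk' hs => ?_⟩
    rcases lt_trichotomy k β with hkβ | rfl | hkβ
    · exact hk₁ k hk hkβ ⟨hs.1, hs.2.trans h⟩
    · exact lt_asymm hs.2 h
    · exact hk₂' k hkβ hk' hs

theorem swapCovers_right_of_left_then_outer (hβγ : β < γ) (h₁ : SwapCovers s α β)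
    (h₂ : SwapCovers (s * swap α β) α γ) : SwapCovers s β γ := by
  obtain ⟨hαβ, -, -⟩ := h₁
  obtain ⟨-, hv, hk₂⟩ := h₂
  simp only [Perm.mul_apply, swap_apply_left,
    swap_apply_of_ne_of_ne (by omega : γ ≠ α) (by omega : γ ≠ β)] at hv hk₂
  refine ⟨hβγ, hv, fun k hk hk' => ?_⟩
  simpa only [swap_apply_of_ne_of_ne (by omega : k ≠ α) (by omega : k ≠ β)]
    using hk₂ k (hαβ.trans hk) hk'

theorem swapCovers_left_or_outer_of_right_then_left (h₁ : SwapCovers s β γ)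
    (h₂ : SwapCovers (s * swap β γ) α β) : SwapCovers s α β ∨ SwapCovers s α γ := by
  obtain ⟨hβγ, hsβγ, hk₁⟩ := h₁
  obtain ⟨hαβ, hv, hk₂⟩ := h₂
  simp only [Perm.mul_apply, swap_apply_left,
    swap_apply_of_ne_of_ne (by omega : α ≠ β) (by omega : α ≠ γ)] at hv hk₂
  have hk₂' : ∀ k, α < k → k < β → ¬(s α < s k ∧ s k < s γ) := fun k h h' => by
    simpa only [swap_apply_of_ne_of_ne (by omega : k ≠ β) (by omega : k ≠ γ)] using hk₂ k h h'
  rcases lt_or_gt_of_ne (s.injective.ne hαβ.ne) with h | h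
  · exact Or.inl ⟨hαβ, h, fun k hk hk' hs => hk₂' k hk hk' ⟨hs.1, hs.2.trans hsβγ⟩⟩
  · refine Or.inr ⟨hαβ.trans hβγ, hv, fun k hk hk' hs => ?_⟩
    rcases lt_trichotomy k β with hkβ | rfl | hkβ
    · exact hk₂' k hk hkβ hs
    · exact lt_asymm hs.1 h
    · exact hk₁ k hkβ hk' ⟨h.trans hs.1, hs.2⟩

theorem swapCovers_left_of_right_then_outer (hαβ : α < β) (h₁ : SwapCovers s β γ)
    (h₂ : SwapCovers (s * swap β γ) α γ) : SwapCovers s α β := by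
  obtain ⟨hβγ, -, -⟩ := h₁
  obtain ⟨-, hv, hk₂⟩ := h₂
  simp only [Perm.mul_apply, swap_apply_right,
    swap_apply_of_ne_of_ne (by omega : α ≠ β) (by omega : α ≠ γ)] at hv hk₂
  refine ⟨hαβ, hv, fun k hk hk' => ?_⟩
  simpa only [swap_apply_of_ne_of_ne (by omega : k ≠ β) (by omega : k ≠ γ)]
    using hk₂ k hk (hk'.trans hβγ)

theorem swapCovers_left_of_outer_then_left (hβγ : β < γ) (h₁ : SwapCovers s α γ)
    (h₂ : SwapCovers (s * swap α γ) α β) : SwapCovers s α β := by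
  obtain ⟨-, hsαγ, hk₁⟩ := h₁
  obtain ⟨hαβ, hv, hk₂⟩ := h₂
  simp only [Perm.mul_apply, swap_apply_left,
    swap_apply_of_ne_of_ne (by omega : β ≠ α) (by omega : β ≠ γ)] at hv hk₂
  refine ⟨hαβ, hsαγ.trans hv, fun k hk hk' hs => ?_⟩
  rcases lt_trichotomy (s k) (s γ) with h | h | h
  · exact hk₁ k hk (hk'.trans hβγ) ⟨hs.1, h⟩
  · exact (hk'.trans hβγ).ne (s.injective h)
  · exact hk₂ k hk hk' (by rw [swap_apply_of_ne_of_ne (by omega) (by omega)]; exact ⟨h, hs.2⟩)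

theorem swapCovers_right_of_outer_then_right (hαβ : α < β) (h₁ : SwapCovers s α γ)
    (h₂ : SwapCovers (s * swap α γ) β γ) : SwapCovers s β γ := by
  obtain ⟨-, hsαγ, hk₁⟩ := h₁
  obtain ⟨hβγ, hv, hk₂⟩ := h₂
  simp only [Perm.mul_apply, swap_apply_right,
    swap_apply_of_ne_of_ne (by omega : β ≠ α) (by omega : β ≠ γ)] at hv hk₂
  refine ⟨hβγ, hv.trans hsαγ, fun k hk hk' hs => ?_⟩
  rcases lt_trichotomy (s k) (s α) with h | h | h
  · exact hk₂ k hk hk' (by rw [swap_apply_of_ne_of_ne (by omega) (by omega)]; exact ⟨hs.1, h⟩)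
  · exact (hαβ.trans hk).ne' (s.injective h)
  · exact hk₁ k (hαβ.trans hk) hk' ⟨h, hs.2⟩

theorem swapCovers_of_disjoint_chain {a b c d : Fin N} (hac : a ≠ c) (had : a ≠ d)
    (hbc : b ≠ c) (hbd : b ≠ d) (h₁ : SwapCovers s a b) (h₂ : SwapCovers (s * swap a b) c d) :
    SwapCovers s c d := by
  obtain ⟨hab, hsab, hk₁⟩ := h₁
  obtain ⟨hcd, hv, hk₂⟩ := h₂
  simp only [Perm.mul_apply, swap_apply_of_ne_of_ne hac.symm hbc.symm,
    swap_apply_of_ne_of_ne had.symm hbd.symm] at hv hk₂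
  refine ⟨hcd, hv, fun k hk hk' hs => ?_⟩
  by_cases hka : k = a
  · subst hka
    have hsb : s d < s b := by
      have := hk₂ k hk hk'
      rw [swap_apply_left] at this
      exact (lt_or_gt_of_ne (s.injective.ne hbd)).resolve_left
        fun h => this ⟨hs.1.trans hsab, h⟩
    rcases lt_or_gt_of_ne hbd with hbd' | hbd'
    · have := hk₂ b (hk.trans hab) hbd'
      rw [swap_apply_right] at this
      exact this hs
    · exact hk₁ d hk' hbd' ⟨hs.2, hsb⟩
  by_cases hkb : k = b
  · subst hkb
    have hsa : s a < s c := by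
      have := hk₂ k hk hk'
      rw [swap_apply_right] at this
      exact (lt_or_gt_of_ne (s.injective.ne hac)).resolve_right
        fun h => this ⟨h, hsab.trans hs.2⟩
    rcases lt_or_gt_of_ne hac with hac' | hac'
    · exact hk₁ c hac' hk ⟨hsa, hs.1⟩
    · have := hk₂ a hac' (hab.trans hk')
      rw [swap_apply_left] at this
      exact this hs
  · exact hk₂ k hk hk' (by rwa [swap_apply_of_ne_of_ne hka hkb])

end Covers

section MiddleSwaps

variable {N : ℕ}

def IsMiddleSwap (s V : Perm (Fin N)) (i j : Fin N) : Prop :=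
  SwapCovers s i j ∧ ∃ k l, swap i j * swap k l = V

def triplePairs (α β γ : Fin N) : Finset (Fin N × Fin N) := {(α, β), (β, γ), (α, γ)}

variable {s : Perm (Fin N)} {α β γ : Fin N}

theorem eq_of_swap_eq_swap {p q : Fin N × Fin N} (hp : p.1 < p.2) (hq : q.1 < q.2)
    (h : swap p.1 p.2 = swap q.1 q.2) : p = q := by
  have h' : swap q.1 q.2 p.1 = p.2 := by rw [← h, swap_apply_left]
  rw [swap_apply_def] at h'
  rw [Prod.ext_iff]
  split_ifs at h' <;> omega

theorem exists_swapCovers_ne_of_chain (hαβ : α < β) (hβγ : β < γ) {p q : Fin N × Fin N}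
    (hp : p ∈ triplePairs α β γ) (hq : q ∈ triplePairs α β γ) (h₁ : SwapCovers s p.1 p.2)
    (h₂ : SwapCovers (s * swap p.1 p.2) q.1 q.2) :
    ∃ r ∈ triplePairs α β γ, r ≠ p ∧ SwapCovers s r.1 r.2 := by
  have hl : (α, β) ∈ triplePairs α β γ := by simp [triplePairs]
  have hr : (β, γ) ∈ triplePairs α β γ := by simp [triplePairs]
  have ho : (α, γ) ∈ triplePairs α β γ := by simp [triplePairs]
  have hne : (β, γ) ≠ (α, β) ∧ (α, γ) ≠ (α, β) ∧ (α, γ) ≠ (β, γ) := by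
    simp only [ne_eq, Prod.mk.injEq]
    omega
  simp only [triplePairs, mem_insert, mem_singleton] at hp hq
  rcases hp with rfl | rfl | rfl <;> rcases hq with rfl | rfl | rfl
  · exact absurd h₂ (not_swapCovers_mul_swap_self h₁)
  · rcases swapCovers_right_or_outer_of_left_then_right h₁ h₂ with h | h
    · exact ⟨_, hr, hne.1, h⟩
    · exact ⟨_, ho, hne.2.1, h⟩
  · exact ⟨_, hr, hne.1, swapCovers_right_of_left_then_outer hβγ h₁ h₂⟩
  · rcases swapCovers_left_or_outer_of_right_then_left h₁ h₂ with h | h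
    · exact ⟨_, hl, hne.1.symm, h⟩
    · exact ⟨_, ho, hne.2.2, h⟩
  · exact absurd h₂ (not_swapCovers_mul_swap_self h₁)
  · exact ⟨_, hl, hne.1.symm, swapCovers_left_of_right_then_outer hαβ h₁ h₂⟩
  · exact ⟨_, hl, hne.2.1.symm, swapCovers_left_of_outer_then_left hβγ h₁ h₂⟩
  · exact ⟨_, hr, hne.2.2.symm, swapCovers_right_of_outer_then_right hαβ h₁ h₂⟩
  · exact absurd h₂ (not_swapCovers_mul_swap_self h₁)

theorem exists_swap_mul_swap_eq_of_mem_triplePairs (hαβ : α < β) (hβγ : β < γ)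
    {p q r : Fin N × Fin N} (hp : p ∈ triplePairs α β γ) (hq : q ∈ triplePairs α β γ)
    (hr : r ∈ triplePairs α β γ) (hpq : p ≠ q) :
    ∃ k l, swap r.1 r.2 * swap k l = swap p.1 p.2 * swap q.1 q.2 := by
  by_cases hrp : r = p
  · exact ⟨q.1, q.2, by rw [hrp]⟩
  by_cases hrq : r = q
  · subst hrq
    exact ⟨_, _, (swap_mul_eq_mul_swap _ _ _).symm⟩
  -- `r` is now the third transposition `p q p`, so `r p = p q`.
  refine ⟨p.1, p.2, ?_⟩
  simp only [triplePairs, mem_insert, mem_singleton] at hp hq hr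
  rcases hp with rfl | rfl | rfl <;> rcases hq with rfl | rfl | rfl <;>
    rcases hr with rfl | rfl | rfl <;> simp only [ne_eq, not_true_eq_false] at hpq hrp hrq <;>
    ext x <;> simp only [Perm.mul_apply, swap_apply_def] <;> split_ifs <;> omega

theorem lt_of_mem_triplePairs (hαβ : α < β) (hβγ : β < γ) {p : Fin N × Fin N}
    (hp : p ∈ triplePairs α β γ) : p.1 < p.2 := by
  simp only [triplePairs, mem_insert, mem_singleton] at hp
  rcases hp with rfl | rfl | rfl <;> dsimp only <;> omega

theorem mem_triplePairs_of_swap_mul_swap_eq (hαβ : α < β) (hβγ : β < γ) {p q : Fin N × Fin N}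
    (hp : p ∈ triplePairs α β γ) (hq : q ∈ triplePairs α β γ) (hpq : p ≠ q) {i j k l : Fin N}
    (hij : i < j) (h : swap i j * swap k l = swap p.1 p.2 * swap q.1 q.2) :
    (i, j) ∈ triplePairs α β γ := by
  have hV : swap p.1 p.2 * swap q.1 q.2 ≠ 1 := by
    rw [Ne, mul_eq_one_iff_eq_inv, swap_inv]
    exact fun h' => hpq (eq_of_swap_eq_swap (lt_of_mem_triplePairs hαβ hβγ hp)
      (lt_of_mem_triplePairs hαβ hβγ hq) h')
  have hmoved : ∀ x, (swap p.1 p.2 * swap q.1 q.2) x ≠ x → x = α ∨ x = β ∨ x = γ := by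
    intro x hx
    by_contra! hx'
    simp only [triplePairs, mem_insert, mem_singleton] at hp hq
    apply hx
    rcases hp with rfl | rfl | rfl <;> rcases hq with rfl | rfl | rfl <;>
      simp only [Perm.mul_apply, swap_apply_of_ne_of_ne hx'.1 hx'.2.1,
        swap_apply_of_ne_of_ne hx'.2.1 hx'.2.2, swap_apply_of_ne_of_ne hx'.1 hx'.2.2]
  have hi := hmoved i (apply_ne_self_of_swap_mul_swap_eq hij.ne h hV)
  have hj := hmoved j (apply_ne_self_of_swap_mul_swap_eq hij.ne' (swap_comm i j ▸ h) hV)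
  simp only [triplePairs, mem_insert, mem_singleton, Prod.mk.injEq]
  omega

theorem isMiddleSwap_iff_of_mem_triplePairs (hαβ : α < β) (hβγ : β < γ) {p q r : Fin N × Fin N}
    (hp : p ∈ triplePairs α β γ) (hq : q ∈ triplePairs α β γ) (hr : r ∈ triplePairs α β γ)
    (hpq : p ≠ q) (hrp : r ≠ p) (hCp : SwapCovers s p.1 p.2) (hCr : SwapCovers s r.1 r.2)
    (i j : Fin N) :
    IsMiddleSwap s (swap p.1 p.2 * swap q.1 q.2) i j ↔
      (i, j) = p ∨ (i, j) = r := by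
  constructor
  · rintro ⟨hC, k, l, h⟩
    have hij := mem_triplePairs_of_swap_mul_swap_eq hαβ hβγ hp hq hpq hC.1 h
    by_contra! hne
    simp only [triplePairs, mem_insert, mem_singleton] at hp hr hij
    rcases hp with rfl | rfl | rfl <;> rcases hr with rfl | rfl | rfl <;>
      rcases hij with h' | h' | h' <;> simp only [Prod.mk.injEq] at h' <;>
      obtain ⟨hi, hj⟩ := h' <;> subst i j <;>
      first
      | exact absurd rfl hrp
      | exact absurd rfl hne.1
      | exact absurd rfl hne.2
      | exact not_swapCovers_of_between ‹SwapCovers s α β› ‹SwapCovers s β γ› ‹SwapCovers s α γ›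
  · rintro (h | h) <;> subst h
    · exact ⟨hCp, q.1, q.2, rfl⟩
    · exact ⟨hCr, exists_swap_mul_swap_eq_of_mem_triplePairs hαβ hβγ hp hq hr hpq⟩

theorem isMiddleSwap_iff_of_disjoint {a b c d : Fin N} (h₁ : SwapCovers s a b)
    (h₂ : SwapCovers s c d) (hac : a ≠ c) (had : a ≠ d) (hbc : b ≠ c) (hbd : b ≠ d) (i j : Fin N) :
    IsMiddleSwap s (swap a b * swap c d) i j ↔ (i, j) = (a, b) ∨ (i, j) = (c, d) := by
  have hcomm : swap a b * swap c d = swap c d * swap a b := by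
    rw [mul_swap_eq_swap_mul, swap_apply_of_ne_of_ne hac.symm hbc.symm,
      swap_apply_of_ne_of_ne had.symm hbd.symm]
  have hVa : (swap a b * swap c d) a = b := by
    rw [Perm.mul_apply, swap_apply_of_ne_of_ne hac had, swap_apply_left]
  have hVb : (swap a b * swap c d) b = a := by
    rw [Perm.mul_apply, swap_apply_of_ne_of_ne hbc hbd, swap_apply_right]
  have hVc : (swap a b * swap c d) c = d := by
    rw [Perm.mul_apply, swap_apply_left, swap_apply_of_ne_of_ne had.symm hbd.symm]
  have hVd : (swap a b * swap c d) d = c := by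
    rw [Perm.mul_apply, swap_apply_right, swap_apply_of_ne_of_ne hac.symm hbc.symm]
  constructor
  · rintro ⟨hC, k, l, h⟩
    have hV1 : swap a b * swap c d ≠ 1 := fun h1 => h₁.1.ne' (by rw [← hVa, h1, Perm.one_apply])
    have hV2 : (swap a b * swap c d) * (swap a b * swap c d) = 1 := by
      nth_rewrite 2 [hcomm]
      simp only [mul_assoc, swap_mul_self_mul, swap_mul_self]
    have hVV : ∀ x, (swap a b * swap c d) ((swap a b * swap c d) x) = x := fun x => by
      rw [← Perm.mul_apply, hV2, Perm.one_apply]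
    have hVi := apply_ne_self_of_swap_mul_swap_eq hC.1.ne h hV1
    have hVij := apply_eq_of_swap_mul_swap_eq hC.1.ne h hVV hVi
    simp only [Prod.mk.injEq]
    by_cases hia : i = a
    · subst hia; rw [hVa] at hVij; exact Or.inl ⟨rfl, hVij.symm⟩
    by_cases hib : i = b
    · subst hib; rw [hVb] at hVij; exact absurd (hVij ▸ hC.1) (lt_asymm h₁.1)
    by_cases hic : i = c
    · subst hic; rw [hVc] at hVij; exact Or.inr ⟨rfl, hVij.symm⟩
    by_cases hid : i = d
    · subst hid; rw [hVd] at hVij; exact absurd (hVij ▸ hC.1) (lt_asymm h₂.1)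
    exact absurd (by rw [Perm.mul_apply, swap_apply_of_ne_of_ne hic hid,
      swap_apply_of_ne_of_ne hia hib]) hVi
  · rintro (h | h) <;> obtain ⟨rfl, rfl⟩ := Prod.mk.inj h
    · exact ⟨h₁, c, d, rfl⟩
    · exact ⟨h₂, a, b, hcomm.symm⟩

theorem exists_triplePairs_of_not_disjoint {a b c d : Fin N} (hab : a < b) (hcd : c < d)
    (hne : (a, b) ≠ (c, d)) (h : a = c ∨ a = d ∨ b = c ∨ b = d) :
    ∃ α β γ, α < β ∧ β < γ ∧ (a, b) ∈ triplePairs α β γ ∧ (c, d) ∈ triplePairs α β γ := by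
  rcases h with rfl | rfl | rfl | rfl
  · rcases lt_trichotomy b d with h | rfl | h
    · exact ⟨a, b, d, hab, h, by simp [triplePairs]⟩
    · exact absurd rfl hne
    · exact ⟨a, d, b, hcd, h, by simp [triplePairs]⟩
  · exact ⟨c, a, b, hcd, hab, by simp [triplePairs]⟩
  · exact ⟨a, b, d, hab, hcd, by simp [triplePairs]⟩
  · rcases lt_trichotomy a c with h | rfl | h
    · exact ⟨a, c, b, h, hcd, by simp [triplePairs]⟩
    · exact absurd rfl hne
    · exact ⟨c, a, b, h, hab, by simp [triplePairs]⟩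

theorem exists_two_isMiddleSwap {a b c d : Fin N} (h₁ : SwapCovers s a b)
    (h₂ : SwapCovers (s * swap a b) c d) :
    ∃ p q : Fin N × Fin N, p ≠ q ∧
      ∀ i j, IsMiddleSwap s (swap a b * swap c d) i j ↔ (i, j) = p ∨ (i, j) = q := by
  have hne : (a, b) ≠ (c, d) := fun h => by
    obtain ⟨rfl, rfl⟩ := Prod.mk.inj h
    exact not_swapCovers_mul_swap_self h₁ h₂
  by_cases hshare : a = c ∨ a = d ∨ b = c ∨ b = d
  · obtain ⟨α, β, γ, hαβ, hβγ, hp, hq⟩ :=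
      exists_triplePairs_of_not_disjoint h₁.1 h₂.1 hne hshare
    obtain ⟨r, hr, hrp, hCr⟩ := exists_swapCovers_ne_of_chain hαβ hβγ hp hq h₁ h₂
    exact ⟨(a, b), r, hrp.symm, isMiddleSwap_iff_of_mem_triplePairs hαβ hβγ hp hq hr hne hrp h₁ hCr⟩
  · push Not at hshare
    obtain ⟨hac, had, hbc, hbd⟩ := hshare
    exact ⟨(a, b), (c, d), hne, isMiddleSwap_iff_of_disjoint h₁
      (swapCovers_of_disjoint_chain hac had hbc hbd h₁ h₂) hac had hbc hbd⟩

theorem middle_iff_exists_isMiddleSwap {s' V : Perm (Fin N)} (hs' : s' = s * V)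
    (hinv : inversions s' = inversions s + 2) (u : Perm (Fin N)) :
    (inversions u = inversions s + 1 ∧ bruhatLT s u ∧ bruhatLT u s') ↔
      ∃ i j, IsMiddleSwap s V i j ∧ u = s * swap i j := by
  constructor
  · rintro ⟨hu, ⟨hsu, -⟩, ⟨hus', -⟩⟩
    obtain ⟨i, j, hC, rfl⟩ := exists_swapCovers_of_bruhatLE hsu hu
    obtain ⟨k, l, -, hkl⟩ := exists_swapCovers_of_bruhatLE hus' (by omega)
    refine ⟨i, j, ⟨hC, k, l, mul_left_cancel (a := s) ?_⟩, rfl⟩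
    rw [← mul_assoc, ← hkl, hs']
  · rintro ⟨i, j, ⟨hC, k, l, hkl⟩, rfl⟩
    have hu := (inversions_mul_swap_eq_add_one_iff hC.1).mpr hC
    have hs'u : s' = s * swap i j * swap k l := by rw [hs', ← hkl, mul_assoc]
    have hkl' : k ≠ l := by
      rintro rfl
      rw [swap_self, ← Perm.one_def, mul_one] at hs'u
      rw [hs'u] at hinv
      omega
    refine ⟨hu, ⟨.single ⟨i, j, hC.1.ne, rfl, by omega⟩, fun h => ?_⟩,
      ⟨.single ⟨k, l, hkl', hs'u, by omega⟩, fun h => ?_⟩⟩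
    · rw [← h] at hu; omega
    · rw [h] at hu; omega

end MiddleSwaps

/-- A length-2 interval in the Bruhat order of S_N is a diamond: there are exactly
two elements of intermediate length strictly between its endpoints. -/
theorem bruhat_interval_diamond {N : ℕ} (s s' : Equiv.Perm (Fin N))
    (h : bruhatLE s s') (hlen : inversions s + 2 = inversions s') :
    ∃ u₁ u₂ : Equiv.Perm (Fin N), u₁ ≠ u₂ ∧
      ∀ u : Equiv.Perm (Fin N),
        (inversions u = inversions s + 1 ∧ bruhatLT s u ∧ bruhatLT u s') ↔
        (u = u₁ ∨ u = u₂) := by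
  obtain ⟨a, b, c, d, h₁, h₂, hs'⟩ := exists_swapCovers_chain_of_bruhatLE h hlen.symm
  obtain ⟨p, q, hpq, hmid⟩ := exists_two_isMiddleSwap h₁ h₂
  have hp := ((hmid p.1 p.2).mpr (Or.inl rfl)).1.1
  have hq := ((hmid q.1 q.2).mpr (Or.inr rfl)).1.1
  refine ⟨s * swap p.1 p.2, s * swap q.1 q.2, fun he => ?_, fun u => ?_⟩
  · exact hpq (eq_of_swap_eq_swap hp hq (mul_left_cancel he))
  rw [middle_iff_exists_isMiddleSwap (by rw [hs', mul_assoc]) hlen.symm]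
  constructor
  · rintro ⟨i, j, hij, rfl⟩
    rcases (hmid i j).mp hij with rfl | rfl
    · exact Or.inl rfl
    · exact Or.inr rfl
  · rintro (rfl | rfl)
    · exact ⟨p.1, p.2, (hmid _ _).mpr (Or.inl rfl), rfl⟩
    · exact ⟨q.1, q.2, (hmid _ _).mpr (Or.inr rfl), rfl⟩
end

section
/- Let s, s' be involutions in S_N with s ≤_B s' and l_I(s') − l_I(s) = 1, where l_I(t) = (inv(t)+exc(t))/2. Then the difference of Coxeter lengths inv(s') − inv(s) is equal to 1, 2 or 3. -/
/-!
Along a Bruhat step `σ ⟶ σ * swap i j` (with `i < j`, `σ i < σ j`) the inversion number grows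
by at least one while the number of non-fixed points drops by at most one, so
`inversions + #support` is monotone along Bruhat chains. For an involution `#support = 2 * exc`,
and `inversions + exc` is even since `(-1) ^ inversions` and `(-1) ^ exc` are both its sign.
Hence `l_I s + 1 = l_I s'` means that `inversions + exc` grows by exactly two, which leaves
`1 ≤ inversions s' - inversions s ≤ 4`. In the extreme case `inversions + #support` is constant
along the chain, so every step creates a fixed point; such a step (`σ j = i` or `σ i = j`)
preserves every crossing number `#{p | p < m ≤ σ p}`. For involutions the crossing numbers
determine the excedances, so `exc s = exc s'`, whereas the count above forces
`exc s' = exc s - 2`.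
-/

open Finset Equiv Equiv.Perm

section

variable {α : Type*} [Fintype α] [DecidableEq α] {i j : α}

theorem sum_eq_add_add_sum_erase_erase {M : Type*} [AddCommMonoid M] (f : α → M) (hij : i ≠ j) :
    ∑ x, f x = f i + f j + ∑ x ∈ (univ.erase i).erase j, f x := by
  rw [← add_sum_erase _ _ (mem_univ i), ← add_sum_erase _ _ (by simpa using hij.symm), add_assoc]

theorem sum_sum_eq_add_add_sum_erase_erase {M : Type*} [AddCommMonoid M] (X : α → α → M)
    (hij : i ≠ j) :
    ∑ p, ∑ q, X p q = X i i + X i j + X j i + X j j +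
      ∑ k ∈ (univ.erase i).erase j, (X i k + X j k + X k i + X k j) +
      ∑ p ∈ (univ.erase i).erase j, ∑ q ∈ (univ.erase i).erase j, X p q := by
  simp only [sum_eq_add_add_sum_erase_erase _ hij, sum_add_distrib]
  abel

theorem mul_swap_apply_of_mem_erase_erase (σ : Perm α) {k : α}
    (hk : k ∈ (univ.erase i).erase j) : (σ * swap i j) k = σ k := by
  simp only [mem_erase] at hk
  rw [mul_apply, swap_apply_of_ne_of_ne hk.2.1 hk.1]

theorem card_filter_mul_swap_add (P : α → α → Prop) [DecidableRel P] (σ : Perm α)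
    (hij : i ≠ j) :
    #{p | P p ((σ * swap i j) p)} + ((if P i (σ i) then 1 else 0) + if P j (σ j) then 1 else 0) =
      #{p | P p (σ p)} + ((if P i (σ j) then 1 else 0) + if P j (σ i) then 1 else 0) := by
  simp only [card_filter, sum_eq_add_add_sum_erase_erase _ hij, mul_apply, swap_apply_left,
    swap_apply_right]
  rw [sum_congr rfl fun k hk => by rw [← mul_apply, mul_swap_apply_of_mem_erase_erase σ hk]]
  abel

theorem card_support_mul_swap_add (σ : Perm α) (hij : i ≠ j) :
    #(σ * swap i j).support + ((if σ i ≠ i then 1 else 0) + if σ j ≠ j then 1 else 0) =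
      #σ.support + ((if σ j ≠ i then 1 else 0) + if σ i ≠ j then 1 else 0) :=
  card_filter_mul_swap_add (fun p v => v ≠ p) σ hij

theorem apply_eq_or_apply_eq_of_card_support_mul_swap_lt {σ : Perm α} (hij : i ≠ j)
    (h : #(σ * swap i j).support < #σ.support) : σ j = i ∨ σ i = j := by
  by_contra! hne
  have := card_support_mul_swap_add σ hij
  rw [if_pos hne.1, if_pos hne.2] at this
  split_ifs at this <;> omega

end

section

variable {α : Type*} [Fintype α] [LinearOrder α] {σ : Perm α} {i j : α}

theorem card_support_le_card_support_mul_swap_add_one (hij : i < j) (hσ : σ i < σ j) :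
    #σ.support ≤ #(σ * swap i j).support + 1 := by
  have hne : σ j ≠ i ∨ σ i ≠ j := by
    by_contra! h
    exact lt_asymm hij (h.2 ▸ h.1 ▸ hσ)
  have := card_support_mul_swap_add σ hij.ne
  rcases hne with hne | hne <;> rw [if_pos hne] at this <;> split_ifs at this <;> omega

end

section

variable {N : ℕ} {σ : Perm (Fin N)} {i j : Fin N}

theorem inversions_eq_sum (σ : Perm (Fin N)) :
    inversions σ = ∑ p, ∑ q, if p < q ∧ σ q < σ p then 1 else 0 := by
  rw [inversions, card_filter, Fintype.sum_prod_type]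

theorem inversions_lt_mul_swap (hij : i < j) (hσ : σ i < σ j) :
    inversions σ < inversions (σ * swap i j) := by
  set τ := σ * swap i j
  have hτi : τ i = σ j := swap_apply_left i j ▸ rfl
  have hτj : τ j = σ i := swap_apply_right i j ▸ rfl
  have hτ : ∀ k ∈ (univ.erase i).erase j, τ k = σ k := fun k hk =>
    mul_swap_apply_of_mem_erase_erase σ hk
  simp only [inversions_eq_sum, sum_sum_eq_add_add_sum_erase_erase _ hij.ne]
  -- `(i, j)` becomes an inversion, and for each `k` the pairs through `k` and `i` or `j`
  -- contribute no less after the swap.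
  refine add_lt_add_of_lt_of_le (add_lt_add_of_lt_of_le ?_ (sum_le_sum fun k hk => ?_))
    (sum_le_sum fun p hp => (sum_congr rfl fun q hq => ?_).le)
  · rw [hτi, hτj]
    simp [hij, hσ, hij.not_gt, hσ.not_gt]
  · rw [hτ k hk, hτi, hτj]
    split_ifs <;> omega
  · rw [hτ p hp, hτ q hq]

theorem sign_eq_neg_one_pow_inversions (σ : Perm (Fin N)) : sign σ = (-1) ^ inversions σ := by
  rw [sign_eq_prod_prod_Ioi, inversions_eq_sum, ← prod_pow_eq_pow_sum]
  refine prod_congr rfl fun p _ => ?_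
  rw [← prod_pow_eq_pow_sum, ← filter_lt_eq_Ioi, prod_filter]
  refine prod_congr rfl fun q _ => ?_
  have hinj : p ≠ q → σ p ≠ σ q := σ.injective.ne
  split_ifs <;> simp <;> omega

theorem bruhatStep.exists_mul_swap_of_lt {τ : Perm (Fin N)} (h : bruhatStep σ τ) :
    ∃ i j, i < j ∧ σ i < σ j ∧ τ = σ * swap i j := by
  obtain ⟨i, j, hij, rfl, hle⟩ := h
  wlog hlt : i < j generalizing i j
  · rw [swap_comm] at hle ⊢
    exact this j i hij.symm hle (hij.lt_or_gt.resolve_left hlt)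
  refine ⟨i, j, hlt, ?_, rfl⟩
  by_contra! hji
  have hdesc : (σ * swap i j) i < (σ * swap i j) j := by
    simpa using hji.lt_of_ne (σ.injective.ne hij.symm)
  have := inversions_lt_mul_swap hlt hdesc
  rw [mul_assoc, swap_mul_self, mul_one] at this
  omega

def crossings (m : ℕ) (σ : Perm (Fin N)) : ℕ := #{p : Fin N | (p : ℕ) < m ∧ m ≤ σ p}

theorem crossings_mul_swap (hij : i < j) (hσ : σ i < σ j) (h : σ j = i ∨ σ i = j) (m : ℕ) :
    crossings m (σ * swap i j) = crossings m σ := by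
  have := card_filter_mul_swap_add (fun p v : Fin N => (p : ℕ) < m ∧ m ≤ v) σ hij.ne
  unfold crossings
  rcases h with h | h <;> rw [h] at this hσ <;> split_ifs at this <;> omega

theorem bruhatLE.inversions_add_card_support_le {τ : Perm (Fin N)} (h : bruhatLE σ τ) :
    inversions σ + #σ.support ≤ inversions τ + #τ.support := by
  induction h with
  | refl => exact le_rfl
  | tail _ hstep ih =>
    obtain ⟨i, j, hij, hσ, rfl⟩ := hstep.exists_mul_swap_of_lt
    have := inversions_lt_mul_swap hij hσ
    have := card_support_le_card_support_mul_swap_add_one hij hσ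
    omega

theorem bruhatLE.eq_or_inversions_lt {τ : Perm (Fin N)} (h : bruhatLE σ τ) :
    σ = τ ∨ inversions σ < inversions τ := by
  induction h with
  | refl => exact .inl rfl
  | tail _ hstep ih =>
    obtain ⟨i, j, hij, hσ, rfl⟩ := hstep.exists_mul_swap_of_lt
    have := inversions_lt_mul_swap hij hσ
    exact .inr (ih.elim (· ▸ this) (·.trans this))

theorem bruhatLE.crossings_eq {τ : Perm (Fin N)} (h : bruhatLE σ τ)
    (hH : inversions σ + #σ.support = inversions τ + #τ.support) (m : ℕ) :
    crossings m σ = crossings m τ := by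
  induction h with
  | refl => rfl
  | @tail ρ _ hρ hstep ih =>
    obtain ⟨i, j, hij, hσ, rfl⟩ := hstep.exists_mul_swap_of_lt
    have := inversions_lt_mul_swap hij hσ
    have := card_support_le_card_support_mul_swap_add_one hij hσ
    have := bruhatLE.inversions_add_card_support_le hρ
    rw [ih (by omega), crossings_mul_swap hij hσ
      (apply_eq_or_apply_eq_of_card_support_mul_swap_lt hij.ne (by omega))]

variable {s : Perm (Fin N)}

theorem card_support_eq_two_mul_exced (hs : s * s = 1) : #s.support = 2 * exced s := by
  have hss : ∀ x, s (s x) = x := fun x => by rw [← mul_apply, hs, one_apply]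
  have hdesc : #{x | s x < x} = exced s := by
    rw [exced, card_filter, card_filter, ← Equiv.sum_comp s]
    simp only [hss]
  rw [two_mul]
  nth_rw 2 [← hdesc]
  rw [exced, ← card_union_of_disjoint (disjoint_filter.2 fun x _ h => h.not_gt)]
  congr 1
  ext x
  simp only [mem_support, mem_union, mem_filter, mem_univ, true_and]
  omega

theorem even_inversions_add_exced (hs : s * s = 1) : Even (inversions s + exced s) := by
  have hsign : sign s = (-1) ^ exced s := by
    rw [sign_of_pow_two_eq_one (by rwa [sq]), card_fixedPoints, sum_cycleType,
      Nat.sub_sub_self (card_le_univ _), card_support_eq_two_mul_exced hs,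
      Nat.mul_div_cancel_left _ two_pos]
  rw [← neg_one_pow_eq_one_iff_even (R := ℤˣ) (by decide), pow_add,
    ← sign_eq_neg_one_pow_inversions, hsign, ← pow_add, ← two_mul, pow_mul]
  simp

theorem crossings_succ_add (σ : Perm (Fin N)) (x : Fin N) :
    crossings (x + 1) σ + (if σ⁻¹ x < x then 1 else 0) =
      crossings x σ + (if x < σ x then 1 else 0) := by
  have hleft : (if σ⁻¹ x < x then 1 else 0) = ∑ p, if σ p = x ∧ p < x then 1 else 0 := by
    simp_rw [← eq_inv_iff_eq, ite_and, sum_ite_eq', mem_univ, if_true]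
  have hright : (if x < σ x then 1 else 0) = ∑ p, if p = x ∧ x < σ p then 1 else 0 := by
    simp_rw [ite_and, sum_ite_eq', mem_univ, if_true]
  rw [hleft, hright, crossings, crossings, card_filter, card_filter, ← sum_add_distrib,
    ← sum_add_distrib]
  refine sum_congr rfl fun p _ => ?_
  split_ifs <;> omega

theorem lt_apply_iff_crossings_lt (hs : s * s = 1) (x : Fin N) :
    x < s x ↔ crossings x s < crossings (x + 1) s := by
  have := crossings_succ_add s x
  rw [inv_eq_of_mul_eq_one_right hs] at this
  split_ifs at this <;> omega

theorem exced_eq_of_crossings_eq {s' : Perm (Fin N)} (hs : s * s = 1) (hs' : s' * s' = 1)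
    (h : ∀ m, crossings m s = crossings m s') : exced s = exced s' := by
  simp only [exced, lt_apply_iff_crossings_lt hs, lt_apply_iff_crossings_lt hs', h]

end

/-- For involutions s ≤_B s' with involution length difference 1, the difference
of Coxeter lengths (inversion numbers) is 1, 2 or 3. -/
theorem inv_diff_of_lI_succ {N : ℕ} (s s' : Equiv.Perm (Fin N))
    (hs : s * s = 1) (hs' : s' * s' = 1)
    (h : bruhatLE s s') (hlen : lI s + 1 = lI s') :
    inversions s' - inversions s = 1 ∨ inversions s' - inversions s = 2 ∨
      inversions s' - inversions s = 3 := by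
  obtain ⟨k, hk⟩ := even_inversions_add_exced hs
  obtain ⟨k', hk'⟩ := even_inversions_add_exced hs'
  have hsupp := card_support_eq_two_mul_exced hs
  have hsupp' := card_support_eq_two_mul_exced hs'
  unfold lI at hlen
  have hlt : inversions s < inversions s' :=
    h.eq_or_inversions_lt.resolve_left (by rintro rfl; omega)
  have hH := h.inversions_add_card_support_le
  by_contra hD
  have hexc := exced_eq_of_crossings_eq hs hs' (h.crossings_eq (by omega))
  omega
end
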